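/- Let t be a closed μωT_s-expression of category T over Σ in which no subexpression denotes the empty set and every subexpression of category T denoting {ε} is the symbol ε. Then the language |t| consists of well-ordered words only if and only if every subexpression of t of the form t₁×t₂ satisfies t₂ = ε. -/

import Mathlib

/-! ## Countable words over an alphabet -/

/-- A "preword" over `A`: a countable linear order realized as a set of rationals,
together with a labeling of its elements by letters of `A`. -/
structure PreWord (A : Type) : Type where
  carrier : Set ℚ
  label : carrier → A

namespace PreWord

/-- Two prewords are equivalent iff there is an order isomorphism between their
carriers preserving the labels. -/
def Equiv {A : Type} (u v : PreWord A) : Prop :=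
  ∃ f : u.carrier ≃o v.carrier, ∀ q, v.label (f q) = u.label q

theorem Equiv.refl {A : Type} (u : PreWord A) : Equiv u u :=
  ⟨OrderIso.refl _, fun _ => rfl⟩

theorem Equiv.symm {A : Type} {u v : PreWord A} : Equiv u v → Equiv v u := by
  rintro ⟨f, hf⟩
  exact ⟨f.symm, fun q => by rw [← hf (f.symm q), OrderIso.apply_symm_apply]⟩

theorem Equiv.trans {A : Type} {u v w : PreWord A} : Equiv u v → Equiv v w → Equiv u w := by
  rintro ⟨f, hf⟩ ⟨g, hg⟩
  exact ⟨f.trans g, fun q => by rw [OrderIso.trans_apply, hg, hf]⟩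

instance setoid (A : Type) : Setoid (PreWord A) where
  r := Equiv
  iseqv := ⟨Equiv.refl, Equiv.symm, Equiv.trans⟩

end PreWord

/-- A countable word over `A`: an isomorphism class of labeled countable linear orders. -/
def Word (A : Type) : Type := Quotient (PreWord.setoid A)

namespace Word

/-- The word determined by an arbitrary countable linear order `I` with labeling `lab`. -/
noncomputable def of {I A : Type} [LinearOrder I] [Countable I] (lab : I → A) : Word A :=
  let e : I ↪o ℚ := (Order.embedding_from_countable_to_dense I ℚ).some
  Quotient.mk _ ⟨Set.range e, fun q => lab (Classical.choose q.2)⟩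

/-- The empty word. -/
def eps (A : Type) : Word A :=
  Quotient.mk _ ⟨∅, fun q => absurd q.2 (Set.notMem_empty q.1)⟩

/-- The one-letter word. -/
def letter {A : Type} (a : A) : Word A :=
  Quotient.mk _ ⟨{(0 : ℚ)}, fun _ => a⟩

/-- Relabeling of a word along a function. -/
noncomputable def map {A B : Type} (g : A → B) (w : Word A) : Word B :=
  Quotient.mk _ ⟨(Quotient.out w).carrier, fun q => g ((Quotient.out w).label q)⟩

instance sigmaLexCountable {I : Type} (κ : I → Type) [Countable I] [∀ i, Countable (κ i)] :
    Countable (Σₗ i, κ i) :=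
  inferInstanceAs (Countable (Σ i, κ i))

/-- Generalized concatenation `∏_{i ∈ I} w i` of words over a countable linear order `I`:
the word on the lexicographically ordered disjoint sum of the underlying orders. -/
noncomputable def concat {I A : Type} [LinearOrder I] [Countable I] (w : I → Word A) : Word A :=
  Word.of (I := Σₗ i : I, (Quotient.out (w i)).carrier)
    (fun p => (Quotient.out (w (ofLex p).1)).label (ofLex p).2)

/-- Binary concatenation of words. -/
noncomputable def append {A : Type} (u v : Word A) : Word A :=
  concat (I := Fin 2) ![u, v]

/-- The finite word given by a list of letters. -/
noncomputable def ofList {A : Type} (l : List A) : Word A :=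
  Word.of (I := Fin l.length) l.get

/-- Concatenation of a finite list of words. -/
noncomputable def concatList {A : Type} (l : List (Word A)) : Word A :=
  concat (I := Fin l.length) l.get

/-- A word is scattered if its underlying linear order has no suborder isomorphic to `ℚ`,
equivalently there is no order embedding of `ℚ` into it. -/
def IsScattered {A : Type} (w : Word A) : Prop :=
  IsEmpty (ℚ ↪o (Quotient.out w).carrier)

/-- A word is well-ordered if its underlying linear order has no suborder isomorphic to the
negative integers, i.e. there is no order embedding of `ℕᵒᵈ` into it. -/
def IsWellOrdered {A : Type} (w : Word A) : Prop :=
  IsEmpty (ℕᵒᵈ ↪o (Quotient.out w).carrier)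

end Word

/-! ## Languages and their operations -/

namespace Lang

/-- Concatenation of languages. -/
noncomputable def conc {A : Type} (L₁ L₂ : Set (Word A)) : Set (Word A) :=
  {w | ∃ u ∈ L₁, ∃ v ∈ L₂, w = Word.append u v}

/-- ω-power of a language: `L^ω = {∏_{i∈ℕ} w i : ∀ i, w i ∈ L}`. -/
noncomputable def omegaPow {A : Type} (L : Set (Word A)) : Set (Word A) :=
  {w | ∃ f : ℕ → Word A, (∀ i, f i ∈ L) ∧ w = Word.concat f}

end Lang
/-! ## Pairs of words and their operations -/

namespace PairLang

/-- Product of pairs of words: `(u,v)·(u',v') = (uu', v'v)`. -/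
noncomputable def pairMul {A : Type} (p q : Word A × Word A) : Word A × Word A :=
  (Word.append p.1 q.1, Word.append q.2 p.2)

/-- Concatenation of sets of pairs of words. -/
noncomputable def conc {A : Type} (L L' : Set (Word A × Word A)) : Set (Word A × Word A) :=
  {r | ∃ p ∈ L, ∃ q ∈ L', r = pairMul p q}

/-- Kleene star of a set of pairs of words: `L^* = {(ε,ε)} ∪ L ∪ L·L ∪ ⋯`. -/
noncomputable def star {A : Type} (L : Set (Word A × Word A)) : Set (Word A × Word A) :=
  {r | ∃ l : List (Word A × Word A), (∀ p ∈ l, p ∈ L) ∧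
        r = l.foldr pairMul (Word.eps A, Word.eps A)}

instance sumLexCountable : Countable (ℕ ⊕ₗ ℕᵒᵈ) :=
  inferInstanceAs (Countable (ℕ ⊕ ℕᵒᵈ))

/-- The word `∏_{i∈ℕ}(u_i, v_i) = (u₀u₁⋯)(⋯v₁v₀)`: the concatenation of the first
components in increasing order of `i` followed by the second components in decreasing
order of `i`. -/
noncomputable def omegaWord {A : Type} (f : ℕ → Word A × Word A) : Word A :=
  Word.concat (I := ℕ ⊕ₗ ℕᵒᵈ)
    (fun i => Sum.elim (fun n : ℕ => (f n).1)
      (fun n : ℕᵒᵈ => (f (OrderDual.ofDual n)).2) (ofLex i))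

/-- ω-power of a set of pairs of words, a language of words. -/
noncomputable def omegaPow {A : Type} (L : Set (Word A × Word A)) : Set (Word A) :=
  {w | ∃ f : ℕ → Word A × Word A, (∀ i, f i ∈ L) ∧ w = omegaWord f}

/-- `L₁ × L₂ = {(u,v) : u ∈ L₁, v ∈ L₂}`. -/
def prod {A : Type} (L₁ L₂ : Set (Word A)) : Set (Word A × Word A) :=
  {p | p.1 ∈ L₁ ∧ p.2 ∈ L₂}

end PairLang
/-! ## μωT_s-expressions -/

mutual
  /-- `μωT_s`-expressions of syntactic category `T` over the alphabet `A`: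
  `T ::= a | ε | x | T+T | T·T | μx.T | P^ω`. -/
  inductive TS (A : Type) : Type
    | letter : A → TS A
    | eps : TS A
    | var : ℕ → TS A
    | add : TS A → TS A → TS A
    | mul : TS A → TS A → TS A
    | mu : ℕ → TS A → TS A
    | omega : PS A → TS A

  /-- `μωT_s`-expressions of syntactic category `P` over the alphabet `A`:
  `P ::= T×T | P+P | P·P | P^*`. -/
  inductive PS (A : Type) : Type
    | pair : TS A → TS A → PS A
    | add : PS A → PS A → PS A
    | mul : PS A → PS A → PS A
    | star : PS A → PS A
end

mutual
  /-- The free variables of a `T`-expression. -/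
  def TS.free {A : Type} : TS A → Set ℕ
    | .letter _ => ∅
    | .eps => ∅
    | .var x => {x}
    | .add s t => s.free ∪ t.free
    | .mul s t => s.free ∪ t.free
    | .mu x s => s.free \ {x}
    | .omega p => p.free

  /-- The free variables of a `P`-expression. -/
  def PS.free {A : Type} : PS A → Set ℕ
    | .pair s t => s.free ∪ t.free
    | .add p q => p.free ∪ q.free
    | .mul p q => p.free ∪ q.free
    | .star p => p.free
end

mutual
  /-- The language denoted by a `T`-expression in the environment `ρ`. -/
  noncomputable def TS.den {A : Type} : TS A → (ℕ → Set (Word A)) → Set (Word A)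
    | .letter a, _ => {Word.letter a}
    | .eps, _ => {Word.eps A}
    | .var x, ρ => ρ x
    | .add s t, ρ => s.den ρ ∪ t.den ρ
    | .mul s t, ρ => Lang.conc (s.den ρ) (t.den ρ)
    | .mu x s, ρ => sInf {L : Set (Word A) | s.den (Function.update ρ x L) ⊆ L}
    | .omega p, ρ => PairLang.omegaPow (p.den ρ)

  /-- The set of pairs of words denoted by a `P`-expression in the environment `ρ`. -/
  noncomputable def PS.den {A : Type} : PS A → (ℕ → Set (Word A)) → Set (Word A × Word A)
    | .pair s t, ρ => PairLang.prod (s.den ρ) (t.den ρ)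
    | .add p q, ρ => p.den ρ ∪ q.den ρ
    | .mul p q, ρ => PairLang.conc (p.den ρ) (q.den ρ)
    | .star p, ρ => PairLang.star (p.den ρ)
end

mutual
  /-- The `T`-subexpressions of a `T`-expression. -/
  def TS.subT {A : Type} : TS A → Set (TS A)
    | .letter a => {.letter a}
    | .eps => {.eps}
    | .var x => {.var x}
    | .add s t => insert (.add s t) (s.subT ∪ t.subT)
    | .mul s t => insert (.mul s t) (s.subT ∪ t.subT)
    | .mu x s => insert (.mu x s) s.subT
    | .omega p => insert (.omega p) p.subT

  /-- The `T`-subexpressions of a `P`-expression. -/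
  def PS.subT {A : Type} : PS A → Set (TS A)
    | .pair s t => s.subT ∪ t.subT
    | .add p q => p.subT ∪ q.subT
    | .mul p q => p.subT ∪ q.subT
    | .star p => p.subT
end

mutual
  /-- The `P`-subexpressions of a `T`-expression. -/
  def TS.subP {A : Type} : TS A → Set (PS A)
    | .letter _ => ∅
    | .eps => ∅
    | .var _ => ∅
    | .add s t => s.subP ∪ t.subP
    | .mul s t => s.subP ∪ t.subP
    | .mu _ s => s.subP
    | .omega p => insert p p.subP

  /-- The `P`-subexpressions of a `P`-expression. -/
  def PS.subP {A : Type} : PS A → Set (PS A)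
    | .pair s t => insert (.pair s t) (s.subP ∪ t.subP)
    | .add p q => insert (.add p q) (p.subP ∪ q.subP)
    | .mul p q => insert (.mul p q) (p.subP ∪ q.subP)
    | .star p => insert (.star p) p.subP
end

mutual
  /-- Relabeling the letters of a `T`-expression. -/
  def TS.map {A B : Type} (g : A → B) : TS A → TS B
    | .letter a => .letter (g a)
    | .eps => .eps
    | .var x => .var x
    | .add s t => .add (s.map g) (t.map g)
    | .mul s t => .mul (s.map g) (t.map g)
    | .mu x s => .mu x (s.map g)
    | .omega p => .omega (p.map g)

  /-- Relabeling the letters of a `P`-expression. -/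
  def PS.map {A B : Type} (g : A → B) : PS A → PS B
    | .pair s t => .pair (s.map g) (t.map g)
    | .add p q => .add (p.map g) (q.map g)
    | .mul p q => .mul (p.map g) (q.map g)
    | .star p => .star (p.map g)
end

/-- The language denoted by a `T`-expression with its free variables treated as letters:
a language over the alphabet `A ⊕ ℕ` (letters on the left, variables on the right). -/
noncomputable def TS.denL {A : Type} (t : TS A) : Set (Word (A ⊕ ℕ)) :=
  TS.den (t.map Sum.inl) (fun x => {Word.letter (Sum.inr x)})

/-- The set of pairs of words denoted by a `P`-expression with its free variables treated
as letters. -/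
noncomputable def PS.denL {A : Type} (p : PS A) :
    Set (Word (A ⊕ ℕ) × Word (A ⊕ ℕ)) :=
  PS.den (p.map Sum.inl) (fun x => {Word.letter (Sum.inr x)})


/-!
If every `t₁ × t₂` in `t` has `t₂ = ε`, then every pair denoted by a `P`-subexpression is
`(u, ε)` with `u` well-ordered, so the words `(u₀u₁⋯)(⋯εε)` of an `ω`-power are well-ordered;
at `μx.s` the set of all well-ordered words is a prefixed point.

Conversely, a subexpression `t₁ × t₂` with `t₂ ≠ ε` denotes a pair `(u, v)` with `v ≠ ε`. This
defect survives every enclosing operation, as long as the other operands denote nonempty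
languages, up to the enclosing `P^ω`, where `(u, v)^ω` ends in the descending chain `⋯vv`.
Nonemptiness is read off the hypotheses through `shape L = (L ≠ ∅, ∃ w ∈ L, w ≠ ε)`: `shape` is
the lower adjoint of a Galois connection and commutes with all operations, hence with least fixed
points, so the shape of `|s|` only depends on the shapes of the values of the free variables of
`s`. Reading the free variables as letters (`denL`) or as languages of full shape thus gives the
same shape.
-/
theorem wellFoundedLT_iff_isEmpty_natDual_orderEmbedding {α : Type*} [Preorder α] :
    WellFoundedLT α ↔ IsEmpty (ℕᵒᵈ ↪o α) := by
  constructor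
  · intro _
    exact ⟨fun e => not_strictAnti_of_wellFoundedLT (e ∘ OrderDual.toDual)
      fun _ _ hab => e.strictMono (OrderDual.toDual_lt_toDual.2 hab)⟩
  · intro h
    by_contra hwf
    have hnwf : ¬ WellFounded (α := α) (· < ·) := fun hw => hwf ⟨hw⟩
    rw [wellFounded_iff_isEmpty_descending_chain, not_isEmpty_iff] at hnwf
    obtain ⟨f, hf⟩ := hnwf
    exact h.false (OrderEmbedding.ofStrictMono (f ∘ OrderDual.ofDual)
      fun _ _ hab => strictAnti_nat_of_succ_lt hf hab)

theorem Sigma.Lex.wellFoundedLT_iff {ι : Type*} [Preorder ι] {κ : ι → Type*}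
    [∀ i, Preorder (κ i)] :
    WellFoundedLT (Σₗ i, κ i) ↔
      (∀ i, WellFoundedLT (κ i)) ∧ WellFoundedLT {i // Nonempty (κ i)} := by
  constructor
  · intro h
    refine ⟨fun i => ?_, ?_⟩
    · exact StrictMono.wellFoundedLT (f := fun a : κ i => toLex (⟨i, a⟩ : Σ i, κ i))
        fun a b hab => Sigma.Lex.lt_def.2 (Or.inr ⟨rfl, hab⟩)
    · exact StrictMono.wellFoundedLT
        (f := fun j : {i // Nonempty (κ i)} => toLex (⟨j.1, j.2.some⟩ : Σ i, κ i))
        fun j k hjk => Sigma.Lex.lt_def.2 (Or.inl hjk)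
  · rintro ⟨hκ, hsupp⟩
    suffices h : ∀ (j : {i // Nonempty (κ i)}) (a : κ j),
        Acc (· < ·) (toLex (⟨j, a⟩ : Σ i, κ i)) from
      ⟨⟨fun x => h ⟨(ofLex x).1, ⟨(ofLex x).2⟩⟩ (ofLex x).2⟩⟩
    intro j
    induction j using WellFoundedLT.induction with | _ j ihj => ?_
    intro a
    induction a using WellFoundedLT.induction with | _ a iha => ?_
    refine ⟨_, fun y hy => ?_⟩
    obtain ⟨k, b⟩ := y
    rcases Sigma.Lex.lt_def.1 hy with h | ⟨h, hb⟩
    · exact ihj ⟨k, ⟨b⟩⟩ h b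
    · dsimp only at h hb
      subst h
      exact iha b hb

theorem GaloisConnection.l_lfp {α β : Type*} [CompleteLattice α] [CompleteLattice β]
    {l : α → β} {u : β → α} (gc : GaloisConnection l u) (F : α →o α) (G : β →o β)
    (hFG : ∀ a, l (F a) = G (l a)) : l F.lfp = G.lfp := by
  apply le_antisymm
  · rw [gc.le_iff_le]
    apply OrderHom.lfp_le
    rw [← gc.le_iff_le, hFG]
    exact (G.mono (gc.l_u_le _)).trans G.map_lfp.le
  · apply OrderHom.lfp_le
    rw [← hFG, F.map_lfp]

theorem Set.EqOn.update {α β : Type*} [DecidableEq α] {f g : α → β} {s : Set α} {a : α}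
    (h : Set.EqOn f g (s \ {a})) (b : β) :
    Set.EqOn (Function.update f a b) (Function.update g a b) s := by
  intro y hy
  rcases eq_or_ne y a with rfl | hne
  · simp
  · simp only [Function.update_of_ne hne]
    exact h ⟨hy, hne⟩

namespace Word

variable {A : Type} {u v : Word A}

abbrev positions (w : Word A) : Type := (Quotient.out w).carrier

theorem nonempty_orderIso_positions_of {I : Type} [LinearOrder I] [Countable I] (lab : I → A) :
    Nonempty ((Word.of lab).positions ≃o I) := by
  let e : I ↪o ℚ := (Order.embedding_from_countable_to_dense I ℚ).some
  obtain ⟨f, -⟩ := Quotient.mk_out (s := PreWord.setoid A)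
    ⟨Set.range e, fun q => lab (Classical.choose q.2)⟩
  exact ⟨f.trans (e.strictMono.orderIso _).symm⟩

theorem eq_eps_iff {w : Word A} : w = Word.eps A ↔ IsEmpty w.positions := by
  constructor
  · rintro rfl
    obtain ⟨f, -⟩ := Quotient.mk_out (s := PreWord.setoid A)
      ⟨∅, fun q => absurd q.2 (Set.notMem_empty q.1)⟩
    exact f.toEquiv.isEmpty
  · intro _
    rw [← Quotient.out_eq w]
    exact Quotient.sound ⟨⟨Equiv.equivOfIsEmpty _ _, fun {a} => isEmptyElim a⟩, isEmptyElim⟩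

theorem ne_eps_iff {w : Word A} : w ≠ Word.eps A ↔ Nonempty w.positions := by
  rw [Ne, eq_eps_iff, not_isEmpty_iff]

theorem isWellOrdered_iff {w : Word A} : w.IsWellOrdered ↔ WellFoundedLT w.positions :=
  wellFoundedLT_iff_isEmpty_natDual_orderEmbedding.symm

theorem letter_ne_eps (a : A) : Word.letter a ≠ Word.eps A := by
  obtain ⟨f, -⟩ := Quotient.mk_out (s := PreWord.setoid A) ⟨{(0 : ℚ)}, fun _ => a⟩
  exact ne_eps_iff.2 ⟨f.symm ⟨0, rfl⟩⟩

theorem isWellOrdered_letter (a : A) : (Word.letter a).IsWellOrdered := by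
  obtain ⟨f, -⟩ := Quotient.mk_out (s := PreWord.setoid A) ⟨{(0 : ℚ)}, fun _ => a⟩
  have : Finite (Word.letter a).positions := .of_injective f f.injective
  exact isWellOrdered_iff.2 inferInstance

theorem isWellOrdered_eps : (Word.eps A).IsWellOrdered := by
  have := eq_eps_iff.1 (rfl : Word.eps A = Word.eps A)
  exact isWellOrdered_iff.2 inferInstance

theorem ne_eps_of_not_isWellOrdered {w : Word A} (h : ¬ w.IsWellOrdered) : w ≠ Word.eps A :=
  fun hw => h (hw ▸ isWellOrdered_eps)

section Concat

variable {I : Type} [LinearOrder I] [Countable I] (w : I → Word A)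

theorem nonempty_orderIso_positions_concat :
    Nonempty ((concat w).positions ≃o Σₗ i, (w i).positions) :=
  nonempty_orderIso_positions_of _

theorem concat_eq_eps_iff : concat w = Word.eps A ↔ ∀ i, w i = Word.eps A := by
  obtain ⟨f⟩ := nonempty_orderIso_positions_concat w
  simp only [eq_eps_iff]
  exact f.toEquiv.isEmpty_congr.trans isEmpty_sigma

theorem isWellOrdered_concat_iff :
    (concat w).IsWellOrdered ↔
      (∀ i, (w i).IsWellOrdered) ∧ WellFoundedLT {i // w i ≠ Word.eps A} := by
  obtain ⟨f⟩ := nonempty_orderIso_positions_concat w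
  have hsupp : (fun i => w i ≠ Word.eps A) = fun i => Nonempty (w i).positions :=
    funext fun _ => propext ne_eps_iff
  simp only [isWellOrdered_iff]
  rw [hsupp, ← Sigma.Lex.wellFoundedLT_iff]
  exact ⟨fun _ => f.symm.toOrderEmbedding.wellFoundedLT, fun _ => f.toOrderEmbedding.wellFoundedLT⟩

end Concat

theorem append_eq_eps_iff : append u v = Word.eps A ↔ u = Word.eps A ∧ v = Word.eps A := by
  rw [append, concat_eq_eps_iff, Fin.forall_fin_two]
  rfl

theorem isWellOrdered_append_iff :
    (append u v).IsWellOrdered ↔ u.IsWellOrdered ∧ v.IsWellOrdered := by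
  rw [append, isWellOrdered_concat_iff, Fin.forall_fin_two, and_iff_left (Subtype.wellFoundedLT _)]
  rfl

end Word

namespace PairLang

variable {A : Type}

/-- The pairs `r` whose power `r^ω` is well-ordered, see `isWellOrdered_omegaWord_const_iff`. -/
def IsWellOrderedPair (r : Word A × Word A) : Prop :=
  r.1.IsWellOrdered ∧ r.2 = Word.eps A

theorem pairMul_eq_eps_iff {p q : Word A × Word A} :
    pairMul p q = (Word.eps A, Word.eps A) ↔
      p = (Word.eps A, Word.eps A) ∧ q = (Word.eps A, Word.eps A) := by
  simp only [pairMul, Prod.ext_iff, Word.append_eq_eps_iff]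
  tauto

theorem isWellOrderedPair_pairMul_iff {p q : Word A × Word A} :
    IsWellOrderedPair (pairMul p q) ↔ IsWellOrderedPair p ∧ IsWellOrderedPair q := by
  simp only [IsWellOrderedPair, pairMul, Word.isWellOrdered_append_iff, Word.append_eq_eps_iff]
  tauto

theorem foldr_pairMul_iff {P : Word A × Word A → Prop}
    (hP : ∀ p q, P (pairMul p q) ↔ P p ∧ P q) (hε : P (Word.eps A, Word.eps A))
    (l : List (Word A × Word A)) :
    P (l.foldr pairMul (Word.eps A, Word.eps A)) ↔ ∀ p ∈ l, P p := by
  induction l with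
  | nil => simpa using hε
  | cons p l ih => rw [List.foldr_cons, hP, ih, List.forall_mem_cons]

theorem omegaWord_eq_eps_iff (f : ℕ → Word A × Word A) :
    omegaWord f = Word.eps A ↔ ∀ n, f n = (Word.eps A, Word.eps A) := by
  rw [omegaWord, Word.concat_eq_eps_iff]
  simp [Lex.forall, Sum.forall, Prod.ext_iff, forall_and]

theorem isWellOrdered_omegaWord {f : ℕ → Word A × Word A} (hf : ∀ n, IsWellOrderedPair (f n)) :
    (omegaWord f).IsWellOrdered := by
  rw [omegaWord, Word.isWellOrdered_concat_iff]
  refine ⟨fun i => ?_, ?_⟩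
  · rcases i with n | n
    · exact (hf n).1
    · change (f (OrderDual.ofDual n)).2.IsWellOrdered
      exact (hf _).2 ▸ Word.isWellOrdered_eps
  · -- all nonempty factors lie in the `ℕ` half of `ℕ ⊕ₗ ℕᵒᵈ`
    refine StrictMono.wellFoundedLT (f := fun i => Sum.elim id (fun _ => 0) (ofLex i.1)) ?_
    rintro ⟨m | m, hm⟩ ⟨n | n, hn⟩ hmn
    · exact Sum.Lex.inl_lt_inl_iff.1 hmn
    · exact absurd (hf _).2 hn
    all_goals exact absurd (hf _).2 hm

theorem isWellOrdered_omegaWord_const_iff (r : Word A × Word A) :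
    (omegaWord fun _ => r).IsWellOrdered ↔ IsWellOrderedPair r := by
  refine ⟨fun h => ?_, fun h => isWellOrdered_omegaWord fun _ => h⟩
  rw [omegaWord, Word.isWellOrdered_concat_iff] at h
  obtain ⟨hw, hsupp⟩ := h
  refine ⟨hw (toLex (Sum.inl 0)), by_contra fun hne => ?_⟩
  exact @not_strictAnti_of_wellFoundedLT _ _ hsupp
    (fun n => ⟨toLex (Sum.inr (OrderDual.toDual n)), hne⟩)
    fun _ _ hmn => Sum.Lex.inr_lt_inr_iff.2 (OrderDual.toDual_lt_toDual.2 hmn)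

end PairLang

section Shape

variable {M N P : Type*}

def shape (e : M) (L : Set M) : Prop × Prop :=
  (L.Nonempty, ∃ w ∈ L, w ≠ e)

theorem gc_shape (e : M) : GaloisConnection (shape e) fun d => {w | d.1 ∧ (w ≠ e → d.2)} := by
  intro L d
  constructor
  · rintro ⟨h₁, h₂⟩ w hw
    exact ⟨h₁ ⟨w, hw⟩, fun hne => h₂ ⟨w, hw, hne⟩⟩
  · intro h
    exact ⟨fun ⟨w, hw⟩ => (h hw).1, fun ⟨w, hw, hne⟩ => (h hw).2 hne⟩

theorem shape_eq_top {e : M} {L : Set M} : shape e L = ⊤ ↔ L.Nonempty ∧ ∃ w ∈ L, w ≠ e := by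
  simp [shape, Prod.ext_iff]

theorem shape_singleton (e a : M) : shape e {a} = (True, a ≠ e) := by
  simp [shape]

theorem shape_eq_top_of_ne {e : M} {L : Set M} (h₁ : L ≠ ∅) (h₂ : L ≠ {e}) :
    shape e L = ⊤ := by
  refine shape_eq_top.2 ⟨Set.nonempty_iff_ne_empty.2 h₁, ?_⟩
  by_contra! h
  exact h₂ (Set.eq_singleton_iff_nonempty_unique_mem.2 ⟨Set.nonempty_iff_ne_empty.2 h₁, h⟩)

def shapeMul (d d' : Prop × Prop) : Prop × Prop :=
  (d.1 ∧ d'.1, d.2 ∧ d'.1 ∨ d.1 ∧ d'.2)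

theorem shapeMul_le_shapeMul {d₁ d₂ d₁' d₂' : Prop × Prop} (h : d₁ ≤ d₂) (h' : d₁' ≤ d₂') :
    shapeMul d₁ d₁' ≤ shapeMul d₂ d₂' :=
  ⟨And.imp h.1 h'.1, Or.imp (And.imp h.2 h'.1) (And.imp h.1 h'.2)⟩

theorem shape_image2 {f : M → N → P} {a : M} {b : N} {c : P}
    (hf : ∀ x y, f x y = c ↔ x = a ∧ y = b) (s : Set M) (t : Set N) :
    shape c (Set.image2 f s t) = shapeMul (shape a s) (shape b t) := by
  refine Prod.ext (propext Set.image2_nonempty_iff) (propext ⟨?_, ?_⟩)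
  · rintro ⟨_, ⟨x, hx, y, hy, rfl⟩, hne⟩
    rw [Ne, hf, not_and_or] at hne
    rcases hne with hx' | hy'
    · exact Or.inl ⟨⟨x, hx, hx'⟩, y, hy⟩
    · exact Or.inr ⟨⟨x, hx⟩, y, hy, hy'⟩
  · rintro (⟨⟨x, hx, hx'⟩, y, hy⟩ | ⟨⟨x, hx⟩, y, hy, hy'⟩)
    · exact ⟨f x y, Set.mem_image2_of_mem hx hy, fun h => hx' ((hf x y).1 h).1⟩
    · exact ⟨f x y, Set.mem_image2_of_mem hx hy, fun h => hy' ((hf x y).1 h).2⟩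

end Shape

theorem shape_letter {A : Type} (a : A) : shape (Word.eps A) {Word.letter a} = ⊤ := by
  rw [shape_singleton, eq_true (Word.letter_ne_eps a)]
  rfl

theorem Lang.shape_conc {A : Type} (L₁ L₂ : Set (Word A)) :
    shape (Word.eps A) (Lang.conc L₁ L₂) =
      shapeMul (shape (Word.eps A) L₁) (shape (Word.eps A) L₂) := by
  have hconc : Lang.conc L₁ L₂ = Set.image2 Word.append L₁ L₂ := by
    ext
    simp only [Lang.conc, Set.mem_ofPred_eq, Set.mem_image2, eq_comm]
  rw [hconc, shape_image2 fun _ _ => Word.append_eq_eps_iff]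

namespace PairLang

variable {A : Type}

theorem shape_prod (L₁ L₂ : Set (Word A)) :
    shape (Word.eps A, Word.eps A) (prod L₁ L₂) =
      shapeMul (shape (Word.eps A) L₁) (shape (Word.eps A) L₂) := by
  rw [show prod L₁ L₂ = Set.image2 Prod.mk L₁ L₂ from Set.image2_mk_eq_prod.symm,
    shape_image2 fun _ _ => Prod.ext_iff]

theorem shape_conc (L L' : Set (Word A × Word A)) :
    shape (Word.eps A, Word.eps A) (conc L L') =
      shapeMul (shape (Word.eps A, Word.eps A) L) (shape (Word.eps A, Word.eps A) L') := by
  have hconc : conc L L' = Set.image2 pairMul L L' := by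
    ext
    simp only [conc, Set.mem_ofPred_eq, Set.mem_image2, eq_comm]
  rw [hconc, shape_image2 fun _ _ => pairMul_eq_eps_iff]

theorem shape_star (L : Set (Word A × Word A)) :
    shape (Word.eps A, Word.eps A) (star L) = (True, (shape (Word.eps A, Word.eps A) L).2) := by
  have hfoldr := foldr_pairMul_iff (P := (· = (Word.eps A, Word.eps A)))
    (fun _ _ => pairMul_eq_eps_iff) rfl
  refine Prod.ext (propext ⟨fun _ => trivial, fun _ => ⟨_, [], by simp, rfl⟩⟩) (propext ⟨?_, ?_⟩)
  · rintro ⟨_, ⟨l, hl, rfl⟩, hne⟩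
    obtain ⟨p, hp, hpne⟩ : ∃ p ∈ l, p ≠ (Word.eps A, Word.eps A) := by
      by_contra! h
      exact hne ((hfoldr l).2 h)
    exact ⟨p, hl p hp, hpne⟩
  · rintro ⟨p, hp, hpne⟩
    exact ⟨_, ⟨[p], by simpa using hp, rfl⟩,
      fun h => hpne ((hfoldr [p]).1 h p (List.mem_singleton_self p))⟩

theorem shape_omegaPow (L : Set (Word A × Word A)) :
    shape (Word.eps A) (omegaPow L) = shape (Word.eps A, Word.eps A) L := by
  refine Prod.ext (propext ⟨fun ⟨_, f, hf, _⟩ => ⟨f 0, hf 0⟩,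
    fun ⟨r, hr⟩ => ⟨_, fun _ => r, fun _ => hr, rfl⟩⟩) (propext ⟨?_, ?_⟩)
  · rintro ⟨_, ⟨f, hf, rfl⟩, hne⟩
    obtain ⟨n, hn⟩ := not_forall.1 (mt (omegaWord_eq_eps_iff f).2 hne)
    exact ⟨f n, hf n, hn⟩
  · rintro ⟨r, hr, hne⟩
    exact ⟨_, ⟨fun _ => r, fun _ => hr, rfl⟩, fun h => hne ((omegaWord_eq_eps_iff _).1 h 0)⟩

end PairLang

section Expressions

variable {A : Type}

theorem TS.self_mem_subT (t : TS A) : t ∈ t.subT := by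
  cases t <;> simp [TS.subT]

theorem PS.self_mem_subP (p : PS A) : p ∈ p.subP := by
  cases p <;> simp [PS.subP]

mutual
  theorem TS.den_monotone : (t : TS A) → Monotone t.den
    | .letter _ => monotone_const
    | .eps => monotone_const
    | .var x => fun _ _ h => h x
    | .add s t => (TS.den_monotone s).sup (TS.den_monotone t)
    | .mul s t => fun _ _ h _ ⟨u, hu, v, hv, e⟩ =>
      ⟨u, TS.den_monotone s h hu, v, TS.den_monotone t h hv, e⟩
    | .mu _ s => fun _ _ h => sInf_le_sInf fun _ hL =>
      (TS.den_monotone s (update_le_update_iff.2 ⟨le_rfl, fun j _ => h j⟩)).trans hL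
    | .omega p => fun _ _ h _ ⟨f, hf, e⟩ => ⟨f, fun i => PS.den_monotone p h (hf i), e⟩

  theorem PS.den_monotone : (p : PS A) → Monotone p.den
    | .pair s t => fun _ _ h => Set.prod_mono (TS.den_monotone s h) (TS.den_monotone t h)
    | .add p q => (PS.den_monotone p).sup (PS.den_monotone q)
    | .mul p q => fun _ _ h _ ⟨r, hr, r', hr', e⟩ =>
      ⟨r, PS.den_monotone p h hr, r', PS.den_monotone q h hr', e⟩
    | .star p => fun _ _ h _ ⟨l, hl, e⟩ => ⟨l, fun r hr => PS.den_monotone p h (hl r hr), e⟩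
end

theorem TS.den_mu_eq (x : ℕ) (s : TS A) (ρ : ℕ → Set (Word A)) :
    (TS.mu x s).den ρ = s.den (Function.update ρ x ((TS.mu x s).den ρ)) :=
  (OrderHom.map_lfp ⟨fun L => s.den (Function.update ρ x L),
    (TS.den_monotone s).comp Function.update_mono⟩).symm

mutual
  noncomputable def TS.shapeDen : TS A → (ℕ → Prop × Prop) → Prop × Prop
    | .letter _, _ => ⊤
    | .eps, _ => (True, False)
    | .var x, η => η x
    | .add s t, η => s.shapeDen η ⊔ t.shapeDen η
    | .mul s t, η => shapeMul (s.shapeDen η) (t.shapeDen η)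
    | .mu x s, η => sInf {d | s.shapeDen (Function.update η x d) ≤ d}
    | .omega p, η => p.shapeDen η

  noncomputable def PS.shapeDen : PS A → (ℕ → Prop × Prop) → Prop × Prop
    | .pair s t, η => shapeMul (s.shapeDen η) (t.shapeDen η)
    | .add p q, η => p.shapeDen η ⊔ q.shapeDen η
    | .mul p q, η => shapeMul (p.shapeDen η) (q.shapeDen η)
    | .star p, η => (True, (p.shapeDen η).2)
end

mutual
  theorem TS.shapeDen_monotone : (t : TS A) → Monotone t.shapeDen
    | .letter _ => monotone_const
    | .eps => monotone_const
    | .var x => fun _ _ h => h x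
    | .add s t => (TS.shapeDen_monotone s).sup (TS.shapeDen_monotone t)
    | .mul s t => fun _ _ h =>
      shapeMul_le_shapeMul (TS.shapeDen_monotone s h) (TS.shapeDen_monotone t h)
    | .mu _ s => fun _ _ h => sInf_le_sInf fun _ hd =>
      (TS.shapeDen_monotone s (update_le_update_iff.2 ⟨le_rfl, fun j _ => h j⟩)).trans hd
    | .omega p => PS.shapeDen_monotone p

  theorem PS.shapeDen_monotone : (p : PS A) → Monotone p.shapeDen
    | .pair s t => fun _ _ h =>
      shapeMul_le_shapeMul (TS.shapeDen_monotone s h) (TS.shapeDen_monotone t h)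
    | .add p q => (PS.shapeDen_monotone p).sup (PS.shapeDen_monotone q)
    | .mul p q => fun _ _ h =>
      shapeMul_le_shapeMul (PS.shapeDen_monotone p h) (PS.shapeDen_monotone q h)
    | .star p => fun _ _ h => ⟨le_rfl, (PS.shapeDen_monotone p h).2⟩
end

mutual
  theorem TS.shapeDen_congr : (t : TS A) → {η₁ η₂ : ℕ → Prop × Prop} →
      Set.EqOn η₁ η₂ t.free → t.shapeDen η₁ = t.shapeDen η₂
    | .letter _, _, _, _ => rfl
    | .eps, _, _, _ => rfl
    | .var _, _, _, h => h rfl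
    | .add s t, _, _, h => congrArg₂ (· ⊔ ·)
      (TS.shapeDen_congr s (h.mono Set.subset_union_left))
      (TS.shapeDen_congr t (h.mono Set.subset_union_right))
    | .mul s t, _, _, h => congrArg₂ shapeMul
      (TS.shapeDen_congr s (h.mono Set.subset_union_left))
      (TS.shapeDen_congr t (h.mono Set.subset_union_right))
    | .mu _ s, _, _, h => congrArg sInf <| Set.ext fun d =>
      Iff.of_eq (congrArg (· ≤ d) (TS.shapeDen_congr s (h.update d)))
    | .omega p, _, _, h => PS.shapeDen_congr p h

  theorem PS.shapeDen_congr : (p : PS A) → {η₁ η₂ : ℕ → Prop × Prop} →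
      Set.EqOn η₁ η₂ p.free → p.shapeDen η₁ = p.shapeDen η₂
    | .pair s t, _, _, h => congrArg₂ shapeMul
      (TS.shapeDen_congr s (h.mono Set.subset_union_left))
      (TS.shapeDen_congr t (h.mono Set.subset_union_right))
    | .add p q, _, _, h => congrArg₂ (· ⊔ ·)
      (PS.shapeDen_congr p (h.mono Set.subset_union_left))
      (PS.shapeDen_congr q (h.mono Set.subset_union_right))
    | .mul p q, _, _, h => congrArg₂ shapeMul
      (PS.shapeDen_congr p (h.mono Set.subset_union_left))
      (PS.shapeDen_congr q (h.mono Set.subset_union_right))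
    | .star p, _, _, h => congrArg (fun d : Prop × Prop => (True, d.2)) (PS.shapeDen_congr p h)
end

mutual
  theorem TS.shapeDen_map {B : Type} (g : A → B) : (t : TS A) → (t.map g).shapeDen = t.shapeDen
    | .letter _ => rfl
    | .eps => rfl
    | .var _ => rfl
    | .add s t => by simp only [TS.map, TS.shapeDen, TS.shapeDen_map g s, TS.shapeDen_map g t]
    | .mul s t => by simp only [TS.map, TS.shapeDen, TS.shapeDen_map g s, TS.shapeDen_map g t]
    | .mu _ s => by simp only [TS.map, TS.shapeDen, TS.shapeDen_map g s]
    | .omega p => by simp only [TS.map, TS.shapeDen, PS.shapeDen_map g p]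

  theorem PS.shapeDen_map {B : Type} (g : A → B) : (p : PS A) → (p.map g).shapeDen = p.shapeDen
    | .pair s t => by simp only [PS.map, PS.shapeDen, TS.shapeDen_map g s, TS.shapeDen_map g t]
    | .add p q => by simp only [PS.map, PS.shapeDen, PS.shapeDen_map g p, PS.shapeDen_map g q]
    | .mul p q => by simp only [PS.map, PS.shapeDen, PS.shapeDen_map g p, PS.shapeDen_map g q]
    | .star p => by simp only [PS.map, PS.shapeDen, PS.shapeDen_map g p]
end
mutual
  theorem TS.shape_den : (t : TS A) → (ρ : ℕ → Set (Word A)) →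
      shape (Word.eps A) (t.den ρ) = t.shapeDen (shape (Word.eps A) ∘ ρ)
    | .letter a, _ => shape_letter a
    | .eps, _ => by
      rw [TS.den, shape_singleton, ne_self_iff_false]
      rfl
    | .var _, _ => rfl
    | .add s t, ρ => by
      rw [TS.den, TS.shapeDen, ← TS.shape_den s, ← TS.shape_den t]
      exact (gc_shape _).l_sup
    | .mul s t, ρ => by
      rw [TS.den, TS.shapeDen, Lang.shape_conc, TS.shape_den s, TS.shape_den t]
    | .mu x s, ρ =>
      (gc_shape _).l_lfp ⟨fun L => s.den (Function.update ρ x L),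
          (TS.den_monotone s).comp Function.update_mono⟩
        ⟨fun d => s.shapeDen (Function.update (shape (Word.eps A) ∘ ρ) x d),
          (TS.shapeDen_monotone s).comp Function.update_mono⟩
        fun L => by
          simp only [OrderHom.coe_mk]
          rw [TS.shape_den s, Function.comp_update]
    | .omega p, ρ => by
      rw [TS.den, TS.shapeDen, PairLang.shape_omegaPow, PS.shape_den p]

  theorem PS.shape_den : (p : PS A) → (ρ : ℕ → Set (Word A)) →
      shape (Word.eps A, Word.eps A) (p.den ρ) = p.shapeDen (shape (Word.eps A) ∘ ρ)
    | .pair s t, ρ => by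
      rw [PS.den, PS.shapeDen, PairLang.shape_prod, TS.shape_den s, TS.shape_den t]
    | .add p q, ρ => by
      rw [PS.den, PS.shapeDen, ← PS.shape_den p, ← PS.shape_den q]
      exact (gc_shape _).l_sup
    | .mul p q, ρ => by
      rw [PS.den, PS.shapeDen, PairLang.shape_conc, PS.shape_den p, PS.shape_den q]
    | .star p, ρ => by
      rw [PS.den, PS.shapeDen, PairLang.shape_star, PS.shape_den p]
end

theorem TS.shape_den_eq_shape_denL {t : TS A} {ρ : ℕ → Set (Word A)}
    (hρ : ∀ x ∈ t.free, shape (Word.eps A) (ρ x) = ⊤) :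
    shape (Word.eps A) (t.den ρ) = shape (Word.eps (A ⊕ ℕ)) t.denL := by
  rw [TS.denL, TS.shape_den, TS.shape_den, TS.shapeDen_map]
  exact TS.shapeDen_congr t fun x hx => (hρ x hx).trans (shape_letter _).symm

theorem PS.shape_den_eq_shape_denL {p : PS A} {ρ : ℕ → Set (Word A)}
    (hρ : ∀ x ∈ p.free, shape (Word.eps A) (ρ x) = ⊤) :
    shape (Word.eps A, Word.eps A) (p.den ρ) =
      shape (Word.eps (A ⊕ ℕ), Word.eps (A ⊕ ℕ)) p.denL := by
  rw [PS.denL, PS.shape_den, PS.shape_den, PS.shapeDen_map]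
  exact PS.shapeDen_congr p fun x hx => (hρ x hx).trans (shape_letter _).symm

mutual
  theorem TS.den_subset_isWellOrdered : (t : TS A) → (ρ : ℕ → Set (Word A)) →
      (∀ x, ρ x ⊆ {w | w.IsWellOrdered}) →
      (∀ t₁ t₂ : TS A, PS.pair t₁ t₂ ∈ t.subP → t₂ = TS.eps) →
      t.den ρ ⊆ {w | w.IsWellOrdered}
    | .letter a, _, _, _ => Set.singleton_subset_iff.2 (Word.isWellOrdered_letter a)
    | .eps, _, _, _ => Set.singleton_subset_iff.2 Word.isWellOrdered_eps
    | .var x, _, hρ, _ => hρ x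
    | .add s t, ρ, hρ, hpair => Set.union_subset
      (TS.den_subset_isWellOrdered s ρ hρ fun _ _ h => hpair _ _ (Or.inl h))
      (TS.den_subset_isWellOrdered t ρ hρ fun _ _ h => hpair _ _ (Or.inr h))
    | .mul s t, ρ, hρ, hpair => by
      rintro _ ⟨u, hu, v, hv, rfl⟩
      exact Word.isWellOrdered_append_iff.2
        ⟨TS.den_subset_isWellOrdered s ρ hρ (fun _ _ h => hpair _ _ (Or.inl h)) hu,
          TS.den_subset_isWellOrdered t ρ hρ (fun _ _ h => hpair _ _ (Or.inr h)) hv⟩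
    | .mu x s, ρ, hρ, hpair => sInf_le <|
      TS.den_subset_isWellOrdered s _ (update_le_iff.2 ⟨le_rfl, fun y _ => hρ y⟩) hpair
    | .omega p, ρ, hρ, hpair => by
      rintro _ ⟨f, hf, rfl⟩
      exact PairLang.isWellOrdered_omegaWord fun n =>
        PS.den_subset_isWellOrderedPair p ρ hρ (fun _ _ h => hpair _ _ (Or.inr h)) (hf n)

  theorem PS.den_subset_isWellOrderedPair : (p : PS A) → (ρ : ℕ → Set (Word A)) →
      (∀ x, ρ x ⊆ {w | w.IsWellOrdered}) →
      (∀ t₁ t₂ : TS A, PS.pair t₁ t₂ ∈ p.subP → t₂ = TS.eps) →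
      p.den ρ ⊆ {r | PairLang.IsWellOrderedPair r}
    | .pair s t, ρ, hρ, hpair => by
      obtain rfl : t = TS.eps := hpair s t (PS.self_mem_subP _)
      rintro ⟨u, v⟩ ⟨hu, hv⟩
      exact ⟨TS.den_subset_isWellOrdered s ρ hρ (fun _ _ h => hpair _ _ (Or.inr (Or.inl h))) hu,
        hv⟩
    | .add p q, ρ, hρ, hpair => Set.union_subset
      (PS.den_subset_isWellOrderedPair p ρ hρ fun _ _ h => hpair _ _ (Or.inr (Or.inl h)))
      (PS.den_subset_isWellOrderedPair q ρ hρ fun _ _ h => hpair _ _ (Or.inr (Or.inr h)))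
    | .mul p q, ρ, hρ, hpair => by
      rintro _ ⟨r, hr, r', hr', rfl⟩
      exact PairLang.isWellOrderedPair_pairMul_iff.2
        ⟨PS.den_subset_isWellOrderedPair p ρ hρ (fun _ _ h => hpair _ _ (Or.inr (Or.inl h))) hr,
          PS.den_subset_isWellOrderedPair q ρ hρ (fun _ _ h => hpair _ _ (Or.inr (Or.inr h))) hr'⟩
    | .star p, ρ, hρ, hpair => by
      rintro _ ⟨l, hl, rfl⟩
      refine (PairLang.foldr_pairMul_iff (fun _ _ => PairLang.isWellOrderedPair_pairMul_iff)
        ⟨Word.isWellOrdered_eps, rfl⟩ l).2 fun r hr => ?_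
      exact PS.den_subset_isWellOrderedPair p ρ hρ (fun _ _ h => hpair _ _ (Or.inr h)) (hl r hr)
end

theorem TS.den_nonempty {s : TS A} {ρ : ℕ → Set (Word A)}
    (hs : s ≠ TS.eps → shape (Word.eps (A ⊕ ℕ)) s.denL = ⊤)
    (hρ : ∀ x ∈ s.free, shape (Word.eps A) (ρ x) = ⊤) : (s.den ρ).Nonempty := by
  by_cases h : s = TS.eps
  · subst h
    exact Set.singleton_nonempty _
  · exact (shape_eq_top.1 ((TS.shape_den_eq_shape_denL hρ).trans (hs h))).1

theorem PS.den_nonempty {p : PS A} {ρ : ℕ → Set (Word A)} (hp : p.denL.Nonempty)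
    (hρ : ∀ x ∈ p.free, shape (Word.eps A) (ρ x) = ⊤) : (p.den ρ).Nonempty :=
  (congrArg Prod.fst (PS.shape_den_eq_shape_denL hρ)).mpr hp

mutual
  theorem TS.exists_not_isWellOrdered : (t : TS A) → (ρ : ℕ → Set (Word A)) →
      (t₁ t₂ : TS A) → t₂ ≠ TS.eps → PS.pair t₁ t₂ ∈ t.subP →
      (∀ s ∈ t.subT, s ≠ TS.eps → shape (Word.eps (A ⊕ ℕ)) s.denL = ⊤) →
      (∀ q ∈ t.subP, q.denL.Nonempty) →
      (∀ x ∈ t.free, shape (Word.eps A) (ρ x) = ⊤) →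
      ∃ w ∈ t.den ρ, ¬ w.IsWellOrdered
    | .letter _, _, _, _, _, hmem, _, _, _ => absurd hmem (Set.notMem_empty _)
    | .eps, _, _, _, _, hmem, _, _, _ => absurd hmem (Set.notMem_empty _)
    | .var _, _, _, _, _, hmem, _, _, _ => absurd hmem (Set.notMem_empty _)
    | .add s t, ρ, t₁, t₂, ht₂, hmem, hT, hP, hρ => by
      rcases hmem with hmem | hmem
      · obtain ⟨w, hw, hbad⟩ := TS.exists_not_isWellOrdered s ρ t₁ t₂ ht₂ hmem
          (fun u hu => hT u (Or.inr (Or.inl hu))) (fun q hq => hP q (Or.inl hq))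
          (fun x hx => hρ x (Or.inl hx))
        exact ⟨w, Or.inl hw, hbad⟩
      · obtain ⟨w, hw, hbad⟩ := TS.exists_not_isWellOrdered t ρ t₁ t₂ ht₂ hmem
          (fun u hu => hT u (Or.inr (Or.inr hu))) (fun q hq => hP q (Or.inr hq))
          (fun x hx => hρ x (Or.inr hx))
        exact ⟨w, Or.inr hw, hbad⟩
    | .mul s t, ρ, t₁, t₂, ht₂, hmem, hT, hP, hρ => by
      obtain ⟨u, hu⟩ := TS.den_nonempty (hT s (Or.inr (Or.inl (TS.self_mem_subT s))))
        (fun x hx => hρ x (Or.inl hx))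
      obtain ⟨v, hv⟩ := TS.den_nonempty (hT t (Or.inr (Or.inr (TS.self_mem_subT t))))
        (fun x hx => hρ x (Or.inr hx))
      rcases hmem with hmem | hmem
      · obtain ⟨w, hw, hbad⟩ := TS.exists_not_isWellOrdered s ρ t₁ t₂ ht₂ hmem
          (fun u hu => hT u (Or.inr (Or.inl hu))) (fun q hq => hP q (Or.inl hq))
          (fun x hx => hρ x (Or.inl hx))
        exact ⟨_, ⟨w, hw, v, hv, rfl⟩, fun h => hbad (Word.isWellOrdered_append_iff.1 h).1⟩
      · obtain ⟨w, hw, hbad⟩ := TS.exists_not_isWellOrdered t ρ t₁ t₂ ht₂ hmem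
          (fun u hu => hT u (Or.inr (Or.inr hu))) (fun q hq => hP q (Or.inr hq))
          (fun x hx => hρ x (Or.inr hx))
        exact ⟨_, ⟨u, hu, w, hw, rfl⟩, fun h => hbad (Word.isWellOrdered_append_iff.1 h).2⟩
    | .mu x s, ρ, t₁, t₂, ht₂, hmem, hT, hP, hρ => by
      have hfix : shape (Word.eps A) ((TS.mu x s).den ρ) = ⊤ :=
        (TS.shape_den_eq_shape_denL hρ).trans (hT _ (TS.self_mem_subT _) nofun)
      have hρ' : ∀ y ∈ s.free,
          shape (Word.eps A) (Function.update ρ x ((TS.mu x s).den ρ) y) = ⊤ := by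
        intro y hy
        rcases eq_or_ne y x with rfl | hne
        · rwa [Function.update_self]
        · rw [Function.update_of_ne hne]
          exact hρ y ⟨hy, hne⟩
      rw [TS.den_mu_eq]
      exact TS.exists_not_isWellOrdered s _ t₁ t₂ ht₂ hmem (fun u hu => hT u (Or.inr hu)) hP hρ'
    | .omega p, ρ, t₁, t₂, ht₂, hmem, hT, hP, hρ => by
      have hmem' : PS.pair t₁ t₂ ∈ p.subP := by
        rcases hmem with rfl | hmem
        · exact PS.self_mem_subP _
        · exact hmem
      obtain ⟨r, hr, hbad⟩ := PS.exists_not_isWellOrderedPair p ρ t₁ t₂ ht₂ hmem'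
        (fun u hu => hT u (Or.inr hu)) (fun q hq => hP q (Or.inr hq)) hρ
      exact ⟨_, ⟨fun _ => r, fun _ => hr, rfl⟩,
        mt (PairLang.isWellOrdered_omegaWord_const_iff r).1 hbad⟩

  theorem PS.exists_not_isWellOrderedPair : (p : PS A) → (ρ : ℕ → Set (Word A)) →
      (t₁ t₂ : TS A) → t₂ ≠ TS.eps → PS.pair t₁ t₂ ∈ p.subP →
      (∀ s ∈ p.subT, s ≠ TS.eps → shape (Word.eps (A ⊕ ℕ)) s.denL = ⊤) →
      (∀ q ∈ p.subP, q.denL.Nonempty) →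
      (∀ x ∈ p.free, shape (Word.eps A) (ρ x) = ⊤) →
      ∃ r ∈ p.den ρ, ¬ PairLang.IsWellOrderedPair r
    | .pair s t, ρ, t₁, t₂, ht₂, hmem, hT, hP, hρ => by
      obtain ⟨u, hu⟩ := TS.den_nonempty (hT s (Or.inl (TS.self_mem_subT s)))
        (fun x hx => hρ x (Or.inl hx))
      obtain ⟨v, hv⟩ := TS.den_nonempty (hT t (Or.inr (TS.self_mem_subT t)))
        (fun x hx => hρ x (Or.inr hx))
      rcases hmem with heq | hmem | hmem
      · obtain rfl : t₂ = t := (PS.pair.inj heq).2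
        obtain ⟨_, w, hw, hne⟩ := shape_eq_top.1 <|
          (TS.shape_den_eq_shape_denL fun x hx => hρ x (Or.inr hx)).trans
            (hT t₂ (Or.inr (TS.self_mem_subT t₂)) ht₂)
        exact ⟨(u, w), ⟨hu, hw⟩, fun h => hne h.2⟩
      · obtain ⟨w, hw, hbad⟩ := TS.exists_not_isWellOrdered s ρ t₁ t₂ ht₂ hmem
          (fun u hu => hT u (Or.inl hu)) (fun q hq => hP q (Or.inr (Or.inl hq)))
          (fun x hx => hρ x (Or.inl hx))
        exact ⟨(w, v), ⟨hw, hv⟩, fun h => hbad h.1⟩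
      · obtain ⟨w, hw, hbad⟩ := TS.exists_not_isWellOrdered t ρ t₁ t₂ ht₂ hmem
          (fun u hu => hT u (Or.inr hu)) (fun q hq => hP q (Or.inr (Or.inr hq)))
          (fun x hx => hρ x (Or.inr hx))
        exact ⟨(u, w), ⟨hu, hw⟩, fun h => Word.ne_eps_of_not_isWellOrdered hbad h.2⟩
    | .add p q, ρ, t₁, t₂, ht₂, hmem, hT, hP, hρ => by
      rcases hmem with heq | hmem | hmem
      · exact absurd heq nofun
      · obtain ⟨r, hr, hbad⟩ := PS.exists_not_isWellOrderedPair p ρ t₁ t₂ ht₂ hmem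
          (fun u hu => hT u (Or.inl hu)) (fun q hq => hP q (Or.inr (Or.inl hq)))
          (fun x hx => hρ x (Or.inl hx))
        exact ⟨r, Or.inl hr, hbad⟩
      · obtain ⟨r, hr, hbad⟩ := PS.exists_not_isWellOrderedPair q ρ t₁ t₂ ht₂ hmem
          (fun u hu => hT u (Or.inr hu)) (fun q hq => hP q (Or.inr (Or.inr hq)))
          (fun x hx => hρ x (Or.inr hx))
        exact ⟨r, Or.inr hr, hbad⟩
    | .mul p q, ρ, t₁, t₂, ht₂, hmem, hT, hP, hρ => by
      obtain ⟨r₁, hr₁⟩ := PS.den_nonempty (hP p (Or.inr (Or.inl (PS.self_mem_subP p))))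
        (fun x hx => hρ x (Or.inl hx))
      obtain ⟨r₂, hr₂⟩ := PS.den_nonempty (hP q (Or.inr (Or.inr (PS.self_mem_subP q))))
        (fun x hx => hρ x (Or.inr hx))
      rcases hmem with heq | hmem | hmem
      · exact absurd heq nofun
      · obtain ⟨r, hr, hbad⟩ := PS.exists_not_isWellOrderedPair p ρ t₁ t₂ ht₂ hmem
          (fun u hu => hT u (Or.inl hu)) (fun q hq => hP q (Or.inr (Or.inl hq)))
          (fun x hx => hρ x (Or.inl hx))
        exact ⟨_, ⟨r, hr, r₂, hr₂, rfl⟩,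
          fun h => hbad (PairLang.isWellOrderedPair_pairMul_iff.1 h).1⟩
      · obtain ⟨r, hr, hbad⟩ := PS.exists_not_isWellOrderedPair q ρ t₁ t₂ ht₂ hmem
          (fun u hu => hT u (Or.inr hu)) (fun q hq => hP q (Or.inr (Or.inr hq)))
          (fun x hx => hρ x (Or.inr hx))
        exact ⟨_, ⟨r₁, hr₁, r, hr, rfl⟩,
          fun h => hbad (PairLang.isWellOrderedPair_pairMul_iff.1 h).2⟩
    | .star p, ρ, t₁, t₂, ht₂, hmem, hT, hP, hρ => by
      rcases hmem with heq | hmem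
      · exact absurd heq nofun
      obtain ⟨r, hr, hbad⟩ := PS.exists_not_isWellOrderedPair p ρ t₁ t₂ ht₂ hmem hT
        (fun q hq => hP q (Or.inr hq)) hρ
      exact ⟨_, ⟨[r], by simpa using hr, rfl⟩,
        fun h => hbad (PairLang.isWellOrderedPair_pairMul_iff.1 h).1⟩
end

end Expressions

/-- Let `t` be a closed `μωT_s`-expression of category `T` in which no subexpression
denotes the empty set and every subexpression of category `T` denoting `{ε}` is the
symbol `ε`. Then `|t|` consists of well-ordered words only iff every subexpression of `t`
of the form `t₁ × t₂` satisfies `t₂ = ε`. -/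
theorem wellOrdered_iff_no_bad_pair (Alph : Type) [Fintype Alph] [Nonempty Alph]
    (t : TS Alph) (hclosed : t.free = ∅)
    (hTempty : ∀ s ∈ t.subT, s.denL ≠ ∅) (hPempty : ∀ q ∈ t.subP, q.denL ≠ ∅)
    (hε : ∀ s ∈ t.subT, s.denL = {Word.eps (Alph ⊕ ℕ)} → s = TS.eps) :
    (∀ w ∈ t.den (fun _ => ∅), w.IsWellOrdered) ↔
      (∀ t₁ t₂ : TS Alph, PS.pair t₁ t₂ ∈ t.subP → t₂ = TS.eps) := by
  constructor
  · intro hwo t₁ t₂ hmem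
    by_contra ht₂
    obtain ⟨w, hw, hbad⟩ := TS.exists_not_isWellOrdered t _ t₁ t₂ ht₂ hmem
      (fun s hs hne => shape_eq_top_of_ne (hTempty s hs) (mt (hε s hs) hne))
      (fun q hq => Set.nonempty_iff_ne_empty.2 (hPempty q hq))
      (by simp [hclosed])
    exact hbad (hwo w hw)
  · intro hpair
    exact TS.den_subset_isWellOrdered t _ (fun _ => Set.empty_subset _) hpair
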